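/- arXiv:1703.01352 — 6 statements merged into one kernel-verified Lean document; each statement's English description precedes it below -/
import Mathlib

section
/- The set of matrices X ∈ sl₂(ℝ) with det(X) = 1, trace(X) = 0 and lower-left entry c₂₁(X) > 0 is exactly the set of matrices of the form ẑ J ẑ⁻¹ where ẑ = [[y, x],[0,1]] with y > 0, and J = [[0,-1],[1,0]]. -/
/-!
Conjugating `J` by `ẑ = [[y, x], [0, 1]]` gives `[[x/y, -(x² + y²)/y], [1/y, -x/y]]`, which has
determinant `1`, trace `0` and lower-left entry `1/y > 0`. Conversely, a matrix `[[a, b], [c, -a]]`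
with `-a² - bc = 1` and `c ≠ 0` is of this form for `y = 1/c` and `x = a/c`.
-/

open Matrix

variable {K : Type*} [Field K]

lemma isUnit_upperTriangular_fin_two (x : K) {y : K} (hy : y ≠ 0) :
    IsUnit !![y, x; 0, 1] := by
  simpa [isUnit_iff_isUnit_det, det_fin_two_of] using hy

lemma inv_upperTriangular_fin_two (x : K) {y : K} (hy : y ≠ 0) :
    (!![y, x; 0, 1])⁻¹ = !![y⁻¹, -x / y; 0, 1] := by
  refine inv_eq_right_inv ?_
  rw [mul_fin_two, one_fin_two]
  simp [hy, mul_div_cancel₀]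

lemma upperTriangular_conj_J (x : K) {y : K} (hy : y ≠ 0) :
    !![y, x; 0, 1] * !![0, -1; 1, 0] * (!![y, x; 0, 1])⁻¹ =
      !![x / y, -(x ^ 2 + y ^ 2) / y; y⁻¹, -x / y] := by
  rw [inv_upperTriangular_fin_two x hy]
  ext i j
  fin_cases i <;> fin_cases j <;> simp [field, add_comm]

lemma eq_upperTriangular_conj_J {X : Matrix (Fin 2) (Fin 2) K} (hdet : X.det = 1)
    (htr : X.trace = 0) (hc : X 1 0 ≠ 0) :
    X = !![(X 1 0)⁻¹, X 0 0 / X 1 0; 0, 1] * !![0, -1; 1, 0] *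
      (!![(X 1 0)⁻¹, X 0 0 / X 1 0; 0, 1])⁻¹ := by
  rw [upperTriangular_conj_J _ (inv_ne_zero hc)]
  rw [det_fin_two] at hdet
  rw [trace_fin_two] at htr
  have h11 : X 1 1 = -X 0 0 := by linear_combination htr
  have h01 : X 0 1 = -(X 0 0 ^ 2 + 1) / X 1 0 := by
    field_simp
    linear_combination -hdet + X 0 0 * htr
  ext i j
  fin_cases i <;> fin_cases j <;> simp [field, h11, h01]

theorem stmt_2 :
    {X : Matrix (Fin 2) (Fin 2) ℝ | X.det = 1 ∧ X.trace = 0 ∧ 0 < X 1 0} =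
      {X : Matrix (Fin 2) (Fin 2) ℝ | ∃ x y : ℝ, 0 < y ∧
        X = !![y, x; 0, 1] * !![0, -1; 1, 0] * (!![y, x; 0, 1])⁻¹} := by
  ext X
  constructor
  · rintro ⟨hdet, htr, hc⟩
    exact ⟨X 0 0 / X 1 0, (X 1 0)⁻¹, inv_pos.2 hc, eq_upperTriangular_conj_J hdet htr hc.ne'⟩
  · rintro ⟨x, y, hy, rfl⟩
    have hP := isUnit_upperTriangular_fin_two x hy.ne'
    refine ⟨?_, ?_, ?_⟩
    · rw [det_conj hP, det_fin_two_of]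
      norm_num
    · rw [trace_conj hP, trace_fin_two_of]
      norm_num
    · rw [upperTriangular_conj_J x hy.ne']
      simpa using hy
end

section
/- Let U = {u ∈ ℝ³ : u₀ + u₁ + u₂ = 1, u_i ≥ 0} and let Z₀(u) = [[(u₁-u₂)/√3, u₀/3 - 2u₁/3 - 2u₂/3],[u₀, (u₂-u₁)/√3]]. If X ∈ sl₂(ℝ) satisfies the star inequalities √3·|c₁₁(X)| < c₂₁(X) and 3c₁₂(X) + c₂₁(X) < 0, then trace(Z₀(u)·X) < 0 for all u ∈ U. -/
/-! The map `u ↦ trace (Z₀(u) X)` is linear in `u`, so on the simplex it is a convex combination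
of its values at the three vertices. For traceless `X` these values are `X₀₁ + X₁₀ / 3` and
`(2/3)(± √3 X₀₀ - X₁₀)`, and the two star inequalities say precisely that all three are negative. -/

theorem Finset.sum_mul_neg_of_sum_eq_one {ι 𝕜 : Type*} [Field 𝕜] [LinearOrder 𝕜]
    [IsStrictOrderedRing 𝕜] {s : Finset ι} {w f : ι → 𝕜} (hw : ∀ i ∈ s, 0 ≤ w i)
    (hw₁ : ∑ i ∈ s, w i = 1) (hf : ∀ i ∈ s, f i < 0) : ∑ i ∈ s, w i * f i < 0 := by
  obtain ⟨j, hjs, hj⟩ : ∃ j ∈ s, 0 < w j := by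
    by_contra! h
    have : ∑ i ∈ s, w i ≤ 0 := Finset.sum_nonpos h
    linarith
  calc ∑ i ∈ s, w i * f i < ∑ i ∈ s, (0 : 𝕜) :=
        Finset.sum_lt_sum (fun i hi ↦ mul_nonpos_of_nonneg_of_nonpos (hw i hi) (hf i hi).le)
          ⟨j, hjs, mul_neg_of_pos_of_neg hj (hf j hjs)⟩
    _ = 0 := Finset.sum_const_zero

theorem trace_Z₀_mul_eq (X : Matrix (Fin 2) (Fin 2) ℝ) (htr : X.trace = 0) (u : Fin 3 → ℝ) :
    ((!![(u 1 - u 2) / Real.sqrt 3, u 0 / 3 - 2 * u 1 / 3 - 2 * u 2 / 3;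
        u 0, (u 2 - u 1) / Real.sqrt 3] : Matrix (Fin 2) (Fin 2) ℝ) * X).trace =
      u 0 * (X 0 1 + X 1 0 / 3) + u 1 * (2 / 3 * (Real.sqrt 3 * X 0 0 - X 1 0)) +
        u 2 * (2 / 3 * (-(Real.sqrt 3 * X 0 0) - X 1 0)) := by
  have hX₁₁ : X 1 1 = -X 0 0 := by
    rw [Matrix.trace_fin_two] at htr
    linarith
  have hsqrt : Real.sqrt 3 ^ 2 = 3 := Real.sq_sqrt (by norm_num)
  rw [Matrix.trace_fin_two]
  simp only [Matrix.mul_apply, Fin.sum_univ_two, Matrix.of_apply, Matrix.cons_val',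
    Matrix.cons_val_zero, Matrix.cons_val_one, Matrix.empty_val', Matrix.cons_val_fin_one,
    hX₁₁]
  field_simp
  linear_combination -2 * (u 1 - u 2) * X 0 0 * hsqrt

theorem stmt_10 (X : Matrix (Fin 2) (Fin 2) ℝ) (htr : X.trace = 0)
    (hstar1 : Real.sqrt 3 * |X 0 0| < X 1 0)
    (hstar2 : 3 * X 0 1 + X 1 0 < 0) :
    ∀ u : Fin 3 → ℝ, u 0 + u 1 + u 2 = 1 → (∀ i, 0 ≤ u i) →
      ((!![(u 1 - u 2) / Real.sqrt 3, u 0 / 3 - 2 * u 1 / 3 - 2 * u 2 / 3;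
           u 0, (u 2 - u 1) / Real.sqrt 3] : Matrix (Fin 2) (Fin 2) ℝ) * X).trace < 0 := by
  intro u hsum hu
  have hsqrt : 0 < Real.sqrt 3 := by positivity
  obtain ⟨hneg, hpos⟩ : -X 1 0 < Real.sqrt 3 * X 0 0 ∧ Real.sqrt 3 * X 0 0 < X 1 0 :=
    abs_lt.mp (by rwa [abs_mul, abs_of_pos hsqrt])
  rw [trace_Z₀_mul_eq X htr u]
  have hcomb := Finset.sum_mul_neg_of_sum_eq_one (s := Finset.univ) (w := u)
    (f := ![X 0 1 + X 1 0 / 3, 2 / 3 * (Real.sqrt 3 * X 0 0 - X 1 0),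
      2 / 3 * (-(Real.sqrt 3 * X 0 0) - X 1 0)])
    (fun i _ ↦ hu i) (by simpa [Fin.sum_univ_three] using hsum)
    (fun i _ ↦ by
      fin_cases i <;>
        simp only [Fin.zero_eta, Fin.mk_one, Fin.reduceFinMk, Matrix.cons_val_zero,
          Matrix.cons_val_one, Matrix.cons_val] <;>
        linarith)
  simpa [Fin.sum_univ_three] using hcomb
end

section
/- Under the identification X = ẑ(x,y) J ẑ(x,y)⁻¹ with ẑ(x,y) = [[y,x],[0,1]], y > 0, the star inequalities √3|c₁₁(X)| < c₂₁(X) and 3c₁₂(X) + c₂₁(X) < 0 on X are equivalent to -1/√3 < x < 1/√3 and x² + y² > 1/3. -/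
theorem stmt_11 (x y : ℝ) (hy : 0 < y) :
    (let X : Matrix (Fin 2) (Fin 2) ℝ :=
      !![y, x; 0, 1] * !![0, -1; 1, 0] * (!![y, x; 0, 1])⁻¹
     Real.sqrt 3 * |X 0 0| < X 1 0 ∧ 3 * X 0 1 + X 1 0 < 0) ↔
    (-(1 / Real.sqrt 3) < x ∧ x < 1 / Real.sqrt 3 ∧ 1/3 < x^2 + y^2) := by
  have hy' : y ≠ 0 := ne_of_gt hy
  have hinv : (!![y, x; 0, 1] : Matrix (Fin 2) (Fin 2) ℝ)⁻¹ = !![1/y, -(x/y); 0, 1] := by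
    apply Matrix.inv_eq_right_inv
    ext i j
    fin_cases i <;> fin_cases j <;>
      simp [Matrix.mul_fin_two, Matrix.one_fin_two] <;> field_simp <;> ring
  have hX : (!![y, x; 0, 1] * !![0, -1; 1, 0] * !![1/y, -(x/y); 0, 1] : Matrix (Fin 2) (Fin 2) ℝ)
      = !![x/y, -(x^2+y^2)/y; 1/y, -(x/y)] := by
    ext i j
    fin_cases i <;> fin_cases j <;>
      simp [Matrix.mul_fin_two] <;> field_simp <;> ring
  simp only [hinv, hX, Matrix.of_apply, Matrix.cons_val', Matrix.cons_val_zero,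
    Matrix.cons_val_one, Matrix.head_cons, Matrix.empty_val', Matrix.cons_val_fin_one,
    Matrix.head_fin_const]
  have h3 : (0:ℝ) < Real.sqrt 3 := Real.sqrt_pos.mpr (by norm_num)
  have h3sq : Real.sqrt 3 ^ 2 = 3 := Real.sq_sqrt (by norm_num)
  have key1 : Real.sqrt 3 * |x/y| < 1/y ↔ Real.sqrt 3 * |x| < 1 := by
    rw [abs_div, abs_of_pos hy, ← mul_div_assoc, div_lt_div_iff₀ hy hy]
    constructor <;> intro h <;> nlinarith [abs_nonneg x]
  have key2 : 3 * (-(x^2+y^2)/y) + 1/y < 0 ↔ 1/3 < x^2 + y^2 := by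
    have heq : 3 * (-(x^2+y^2)/y) + 1/y = (1 - 3*(x^2+y^2))/y := by field_simp; ring
    rw [heq, div_neg_iff]
    constructor
    · rintro (⟨_, hneg⟩ | ⟨h, _⟩) <;> linarith
    · intro h; right; exact ⟨by linarith, hy⟩
  have key1' : Real.sqrt 3 * |x| < 1 ↔ |x| < 1 / Real.sqrt 3 := by
    rw [lt_div_iff₀ h3]
    constructor <;> intro h <;> nlinarith
  rw [key1, key1', key2, abs_lt]
  tauto
end

section
/- For real numbers c₀ ≠ 0, α ≠ 0, m, the curve g(s) = I + ((s-1)/(α² c₀ s)) · [[c₀ - m, *],[1, m - c₀ s]], where the entry * is chosen so that det(g(s)) = 1 for all s > 0, satisfies g(1) = I and solves α s · dg/ds = g · X(x(s), y(s)) with x(s) = -m + c₀ s, y(s) = c₀ α s, and X(x,y) = [[x/y, -x²/y - y],[1/y, -x/y]]. -/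
/-!
Write `g s = 1 + φ s • N s` with `φ s = (s - 1) / (α² c₀ s)` and `N s = A + s • B` affine in `s`.
Since `tr N s = c₀ (1 - s)` and `det N s = c₀² α² s`, the expansion
`det (1 + t • N) = 1 + t tr N + t² det N` gives `det g s = 1`. The derivative of `g` is
`φ' • N + φ • B` with `φ' s = 1 / (α² c₀ s²)`, and the differential equation becomes a rational
identity between `2 × 2` matrices.
-/

open Matrix

theorem det_one_add_smul_fin_two (t : ℝ) (N : Matrix (Fin 2) (Fin 2) ℝ) :
    (1 + t • N).det = 1 + t * N.trace + t ^ 2 * N.det := by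
  simp only [det_fin_two, trace_fin_two, Matrix.add_apply, Matrix.smul_apply, one_apply,
    Fin.isValue, ↓reduceIte, zero_ne_one, one_ne_zero, smul_eq_mul]
  ring

theorem hasDerivAt_sub_one_div_mul {k s : ℝ} (hk : k ≠ 0) (hs : s ≠ 0) :
    HasDerivAt (fun r => (r - 1) / (k * r)) (1 / (k * s ^ 2)) s := by
  refine (((hasDerivAt_id' s).sub_const 1).fun_div ((hasDerivAt_id' s).const_mul k)
    (mul_ne_zero hk hs)).congr_deriv ?_
  field_simp
  ring

theorem hasDerivAt_one_add_smul_affine_apply {n : Type*} [DecidableEq n] {f : ℝ → ℝ}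
    {f' s : ℝ} (hf : HasDerivAt f f' s) (A B : Matrix n n ℝ) (i j : n) :
    HasDerivAt (fun r => (1 + f r • (A + r • B)) i j) ((f' • (A + s • B) + f s • B) i j) s := by
  have hN : HasDerivAt (fun r => A i j + r * B i j) (B i j) s := by
    simpa using ((hasDerivAt_id s).mul_const (B i j)).const_add (A i j)
  simpa only [Matrix.add_apply, Matrix.smul_apply, smul_eq_mul] using
    (hf.fun_mul hN).const_add ((1 : Matrix n n ℝ) i j)

namespace SL2Curve

variable (c₀ α m : ℝ)

def constCoeff : Matrix (Fin 2) (Fin 2) ℝ := !![c₀ - m, (c₀ - m) * m; 1, m]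

def slopeCoeff : Matrix (Fin 2) (Fin 2) ℝ := !![0, -(c₀ - m) * c₀ - c₀ ^ 2 * α ^ 2; 0, -c₀]

theorem constCoeff_add_smul_slopeCoeff (s : ℝ) :
    constCoeff c₀ m + s • slopeCoeff c₀ α m =
      !![c₀ - m, (c₀ - m) * (m - c₀ * s) - c₀ ^ 2 * α ^ 2 * s; 1, m - c₀ * s] := by
  ext i j
  fin_cases i <;> fin_cases j <;> simp only [constCoeff, slopeCoeff,
    Matrix.add_apply, smul_of, smul_cons, smul_empty, smul_eq_mul, of_apply, cons_val', cons_val_zero,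
    cons_val_one, cons_val_fin_one, Fin.zero_eta, Fin.mk_one, Fin.isValue] <;> ring

theorem trace_constCoeff_add_smul (s : ℝ) :
    (constCoeff c₀ m + s • slopeCoeff c₀ α m).trace = c₀ * (1 - s) := by
  rw [constCoeff_add_smul_slopeCoeff, trace_fin_two_of]
  ring

theorem det_constCoeff_add_smul (s : ℝ) :
    (constCoeff c₀ m + s • slopeCoeff c₀ α m).det = c₀ ^ 2 * α ^ 2 * s := by
  rw [constCoeff_add_smul_slopeCoeff, det_fin_two_of]
  ring

variable {c₀ α}

theorem smul_deriv_eq_mul (hc₀ : c₀ ≠ 0) (hα : α ≠ 0) {s : ℝ} (hs : s ≠ 0) :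
    (α * s) • ((1 / (α ^ 2 * c₀ * s ^ 2)) • (constCoeff c₀ m + s • slopeCoeff c₀ α m) +
        ((s - 1) / (α ^ 2 * c₀ * s)) • slopeCoeff c₀ α m) =
      (1 + ((s - 1) / (α ^ 2 * c₀ * s)) • (constCoeff c₀ m + s • slopeCoeff c₀ α m)) *
        !![(-m + c₀ * s) / (c₀ * α * s), -(-m + c₀ * s) ^ 2 / (c₀ * α * s) - c₀ * α * s;
          1 / (c₀ * α * s), -(-m + c₀ * s) / (c₀ * α * s)] := by
  rw [constCoeff_add_smul_slopeCoeff, slopeCoeff]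
  ext i j
  fin_cases i <;> fin_cases j <;> simp [mul_apply, Fin.sum_univ_two, one_apply] <;> field_simp <;>
    ring

end SL2Curve

open SL2Curve

theorem stmt_13 (c₀ α m : ℝ) (hc₀ : c₀ ≠ 0) (hα : α ≠ 0) :
    let g : ℝ → Matrix (Fin 2) (Fin 2) ℝ := fun s =>
      1 + ((s - 1) / (α^2 * c₀ * s)) •
        !![c₀ - m, (c₀ - m) * (m - c₀ * s) - c₀^2 * α^2 * s; 1, m - c₀ * s]
    let X : ℝ → ℝ → Matrix (Fin 2) (Fin 2) ℝ := fun x y =>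
      !![x/y, -x^2/y - y; 1/y, -x/y]
    g 1 = 1 ∧
    (∀ s : ℝ, 0 < s → (g s).det = 1) ∧
    (∀ s : ℝ, 0 < s → ∃ D : Matrix (Fin 2) (Fin 2) ℝ,
      (∀ i j, HasDerivAt (fun r => g r i j) (D i j) s) ∧
      (α * s) • D = g s * X (-m + c₀ * s) (c₀ * α * s)) := by
  intro g X
  have hg : g = fun s => 1 + ((s - 1) / (α ^ 2 * c₀ * s)) •
      (constCoeff c₀ m + s • slopeCoeff c₀ α m) := by
    simp only [g, constCoeff_add_smul_slopeCoeff]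
  refine ⟨by simp [hg], fun s hs => ?_, fun s hs => ?_⟩
  · rw [hg, det_one_add_smul_fin_two, trace_constCoeff_add_smul, det_constCoeff_add_smul]
    field_simp
    ring
  · have hφ := hasDerivAt_sub_one_div_mul (mul_ne_zero (pow_ne_zero 2 hα) hc₀) hs.ne'
    refine ⟨_, fun i j => by rw [hg]; exact hasDerivAt_one_add_smul_affine_apply hφ _ _ i j, ?_⟩
    rw [hg]
    exact smul_deriv_eq_mul m hc₀ hα hs.ne'
end

section
/- The function ν₂(t) = (-1 + e^{-2√3 t} + 2√3 t e^{-√3 t})/√3 is negative for all t > 0. -/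
open Real

theorem exp_mul_neg_one_add_exp_neg_two_mul_add (s : ℝ) :
    exp s * (-1 + exp (-2 * s) + 2 * s * exp (-s)) = 2 * (s - sinh s) := by
  have h1 : exp s * exp (-2 * s) = exp (-s) := by rw [← exp_add]; ring_nf
  have h2 : exp s * exp (-s) = 1 := by rw [← exp_add]; simp
  rw [sinh_eq]
  linear_combination h1 + 2 * s * h2

theorem neg_one_add_exp_neg_two_mul_add_lt_zero {s : ℝ} (hs : 0 < s) :
    -1 + exp (-2 * s) + 2 * s * exp (-s) < 0 := by
  refine neg_of_mul_neg_right ?_ (exp_pos s).le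
  rw [exp_mul_neg_one_add_exp_neg_two_mul_add]
  linarith [self_lt_sinh_iff.mpr hs]

theorem stmt_17 (t : ℝ) (ht : 0 < t) :
    (-1 + Real.exp (-2 * Real.sqrt 3 * t) +
      2 * Real.sqrt 3 * t * Real.exp (-Real.sqrt 3 * t)) / Real.sqrt 3 < 0 := by
  have h3 : 0 < √3 := by positivity
  have key := neg_one_add_exp_neg_two_mul_add_lt_zero (mul_pos h3 ht)
  simp only [mul_assoc, neg_mul] at key ⊢
  exact div_neg_of_neg_of_pos key h3
end

section
/- The function f(y,v) with ∂²f/∂y² = -10 - 5v + 2v/y + 7y - 2v·ln 4 + 6y·ln 4 + 4v·ln v - 2(v + 3y)·ln y satisfies: this expression is nonnegative for all (y,v) in the triangle T = {(y,v) ∈ [2√2, 4]² : y ≤ v}. -/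
theorem log_lb (t : ℝ) (ht : 0 < t) : 1 - 1/t ≤ Real.log t := by
  have h := Real.log_le_sub_one_of_pos (inv_pos.mpr ht)
  rw [Real.log_inv] at h
  have : 1/t = t⁻¹ := one_div t
  linarith

set_option maxHeartbeats 1000000 in
theorem stmt_18 (y v : ℝ) (h1 : 2 * Real.sqrt 2 ≤ y) (h2 : y ≤ v) (h3 : v ≤ 4) :
    0 ≤ -10 - 5*v + 2*v/y + 7*y - 2*v*Real.log 4 + 6*y*Real.log 4
      + 4*v*Real.log v - 2*(v + 3*y)*Real.log y := by
  have hs2 : 0 < Real.sqrt 2 := Real.sqrt_pos.mpr (by norm_num)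
  have hy : 0 < y := lt_of_lt_of_le (by positivity) h1
  have hv : 0 < v := lt_of_lt_of_le hy h2
  set a := Real.sqrt y with ha_def
  set b := Real.sqrt v with hb_def
  have ha0 : 0 < a := Real.sqrt_pos.mpr hy
  have hb0 : 0 < b := Real.sqrt_pos.mpr hv
  have ha2 : a^2 = y := Real.sq_sqrt hy.le
  have hb2 : b^2 = v := Real.sq_sqrt hv.le
  have hab : a ≤ b := Real.sqrt_le_sqrt h2
  have hble : b ≤ 2 := by
    rw [hb_def, show (2:ℝ) = Real.sqrt 4 by rw [show (4:ℝ) = 2^2 by norm_num, Real.sqrt_sq]; norm_num]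
    exact Real.sqrt_le_sqrt h3
  have ha4 : 8 ≤ a^4 := by
    have h8 : (2*Real.sqrt 2)^2 = 8 := by
      rw [mul_pow, Real.sq_sqrt]; norm_num; norm_num
    calc (8:ℝ) = (2*Real.sqrt 2)^2 := h8.symm
      _ ≤ y^2 := by nlinarith
      _ = a^4 := by rw [← ha2]; ring
  -- log rewrites
  have hly : Real.log y = 2 * Real.log a := by
    have := Real.log_sqrt hy.le; rw [← ha_def] at this; linarith
  have hlv : Real.log v = 2 * Real.log b := by
    have := Real.log_sqrt hv.le; rw [← hb_def] at this; linarith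
  have hl4 : Real.log 4 = 2 * Real.log 2 := by
    rw [show (4:ℝ) = 2^2 by norm_num, Real.log_pow]; push_cast; ring
  -- three tangent-line bounds
  have e1 : 1 - 2/b ≤ Real.log b - Real.log 2 := by
    have h := log_lb (b/2) (by positivity)
    rw [Real.log_div hb0.ne' (by norm_num), one_div_div] at h
    linarith
  have e2 : 1 - a/b ≤ Real.log b - Real.log a := by
    have h := log_lb (b/a) (by positivity)
    rw [Real.log_div hb0.ne' ha0.ne', one_div_div] at h
    linarith
  have e3 : 1 - a/2 ≤ Real.log 2 - Real.log a := by
    have h := log_lb (2/a) (by positivity)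
    rw [Real.log_div (by norm_num) ha0.ne', one_div_div] at h
    linarith
  -- polynomial core
  have hG : 0 ≤ -10*a^2 + 3*a^2*b^2 + 2*b^2 + 19*a^4 - 8*a^2*b - 4*a^3*b - 6*a^5 := by
    nlinarith [mul_nonneg (sub_nonneg.mpr hab) (sub_nonneg.mpr hble),
      sq_nonneg (b-2), sq_nonneg (a-2), sq_nonneg (a-b),
      mul_nonneg (sub_nonneg.mpr ha4) (sub_nonneg.mpr hble),
      mul_nonneg (sub_nonneg.mpr ha4) (sub_nonneg.mpr (hab.trans hble)),
      mul_nonneg (mul_nonneg (sub_nonneg.mpr hab) (sub_nonneg.mpr hble)) ha0.le,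
      mul_nonneg (sq_nonneg (b-2)) ha0.le,
      mul_nonneg (sq_nonneg (a-2)) ha0.le, ha0.le, sq_nonneg a]
  have main : 0 ≤ -10 - 5*v + 2*v/y + 7*y + 4*v*(1-2/b) + 4*v*(1-a/b) + 12*y*(1-a/2) := by
    have h1' : 2*v/y = 2*b^2/a^2 := by rw [ha2, hb2]
    have h2' : 4*v*(2/b) = 8*b := by rw [← hb2]; field_simp; ring
    have h3' : 4*v*(a/b) = 4*a*b := by rw [← hb2]; field_simp
    have h4' : 2*b^2/a^2 ≥ (2*b^2*a^2)/a^4 := by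
      rw [ge_iff_le, div_le_div_iff₀ (by positivity) (by positivity)]
      ring_nf; nlinarith [sq_nonneg a, sq_nonneg b]
    have h5 : 0 ≤ -10 + 3*b^2 + 2*b^2/a^2 + 19*a^2 - 8*b - 4*a*b - 6*a^3 := by
      rw [show 2*b^2/a^2 = (-10*a^2 + 3*a^2*b^2 + 2*b^2 + 19*a^4 - 8*a^2*b - 4*a^3*b - 6*a^5)/a^2 - (-10 + 3*b^2 + 19*a^2 - 8*b - 4*a*b - 6*a^3) by field_simp; ring]
      have := div_nonneg hG (sq_nonneg a)
      linarith
    calc (0:ℝ) ≤ -10 + 3*b^2 + 2*b^2/a^2 + 19*a^2 - 8*b - 4*a*b - 6*a^3 := h5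
      _ = -10 - 5*v + 2*v/y + 7*y + 4*v*(1-2/b) + 4*v*(1-a/b) + 12*y*(1-a/2) := by
          rw [h1', ← ha2, ← hb2]; field_simp; ring
  have c1 : 4*v*(1-2/b) ≤ 4*v*(Real.log b - Real.log 2) :=
    mul_le_mul_of_nonneg_left e1 (by positivity)
  have c2 : 4*v*(1-a/b) ≤ 4*v*(Real.log b - Real.log a) :=
    mul_le_mul_of_nonneg_left e2 (by positivity)
  have c3 : 12*y*(1-a/2) ≤ 12*y*(Real.log 2 - Real.log a) :=
    mul_le_mul_of_nonneg_left e3 (by positivity)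
  rw [hly, hlv, hl4]
  nlinarith [main, c1, c2, c3]
end
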